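/- arXiv:0912.2610 — 4 statements merged into one kernel-verified Lean document; each statement's English description precedes it below -/
import Mathlib

section
/- Let G be a finite group with |G| > d, U an irreducible unitary representation on ℂ^d, and E positive semidefinite. Then E ≤ (1/(|G|/d − 1)) Σ_{g ≠ 1} U_g E U_g†. -/
open Matrix BigOperators ComplexOrder

/-!
Let `S = ∑_g U_g E U_gᴴ`. It commutes with every `U_h`, so by irreducibility (Schur) it is a
scalar, and comparing traces gives `S = (|G|/d) tr(E) • 1`. Since the sum in the theorem is
`S - E`, writing `t = |G|/d` the claimed matrix equals `t/(t-1) • (tr(E) • 1 - E)`, which is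
positive semidefinite because every eigenvalue of `E` is at most `tr E`.
-/

open scoped MatrixOrder

namespace Matrix

lemma UnitaryGroup.conjTranspose_mul_self {n α : Type*} [Fintype n] [DecidableEq n] [CommRing α]
    [StarRing α] (A : unitaryGroup n α) : (A : Matrix n n α)ᴴ * A = 1 :=
  UnitaryGroup.star_mul_self A

lemma PosSemidef.le_trace_smul_one {n 𝕜 : Type*} [Fintype n] [DecidableEq n] [RCLike 𝕜]
    {A : Matrix n n 𝕜} (hA : A.PosSemidef) : A ≤ A.trace • (1 : Matrix n n 𝕜) := by
  have hspec : ∀ x ∈ spectrum ℝ A, x ≤ ∑ i, hA.1.eigenvalues i := by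
    rw [hA.1.spectrum_real_eq_range_eigenvalues]
    rintro _ ⟨i, rfl⟩
    exact Finset.single_le_sum (fun j _ => hA.eigenvalues_nonneg j) (Finset.mem_univ i)
  convert le_algebraMap_of_spectrum_le hspec hA.1.isSelfAdjoint
  rw [hA.1.trace_eq_sum_eigenvalues, Algebra.algebraMap_eq_smul_one, ← RCLike.ofReal_sum,
    RCLike.real_smul_eq_coe_smul (K := 𝕜)]

section Twirl

variable {G n R : Type*} [Group G] [Fintype G] [Fintype n] [DecidableEq n] [CommRing R]
  [StarRing R] (U : G →* unitaryGroup n R)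

def twirl (A : Matrix n n R) : Matrix n n R :=
  ∑ g, (U g : Matrix n n R) * A * (U g : Matrix n n R)ᴴ

lemma mul_twirl_mul_conjTranspose (A : Matrix n n R) (h : G) :
    (U h : Matrix n n R) * twirl U A * (U h : Matrix n n R)ᴴ = twirl U A := by
  simp only [twirl, Finset.mul_sum, Finset.sum_mul]
  refine Fintype.sum_equiv (Equiv.mulLeft h) _ _ fun g => ?_
  simp [Matrix.mul_assoc]

lemma commute_twirl (A : Matrix n n R) (h : G) : Commute (U h : Matrix n n R) (twirl U A) := by
  unfold Commute SemiconjBy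
  conv_rhs => rw [← mul_twirl_mul_conjTranspose U A h]
  rw [Matrix.mul_assoc _ (U h : Matrix n n R)ᴴ, UnitaryGroup.conjTranspose_mul_self,
    Matrix.mul_one]

lemma trace_twirl (A : Matrix n n R) : (twirl U A).trace = Fintype.card G • A.trace := by
  simp [twirl, trace_sum, trace_mul_cycle _ A, UnitaryGroup.conjTranspose_mul_self]

lemma sum_compl_one_eq_twirl_sub [DecidableEq G] (A : Matrix n n R) :
    ∑ g ∈ ({1}ᶜ : Finset G), (U g : Matrix n n R) * A * (U g : Matrix n n R)ᴴ =
      twirl U A - A := by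
  rw [twirl, ← Finset.sum_compl_add_sum {1}, Finset.sum_singleton]
  simp

end Twirl

lemma twirl_eq_smul_one_of_irreducible {G n 𝕜 : Type*} [Group G] [Fintype G] [Fintype n]
    [DecidableEq n] [Field 𝕜] [CharZero 𝕜] [StarRing 𝕜] (U : G →* unitaryGroup n 𝕜)
    (hirr : ∀ B : Matrix n n 𝕜, (∀ g, (U g : Matrix n n 𝕜) * B = B * U g) →
      ∃ z : 𝕜, B = z • 1)
    (hn : Fintype.card n ≠ 0) (A : Matrix n n 𝕜) :
    twirl U A = ((Fintype.card G : 𝕜) / Fintype.card n * A.trace) • 1 := by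
  obtain ⟨z, hz⟩ := hirr _ fun g => (commute_twirl U A g).eq
  have htrace := trace_twirl U A
  rw [hz, trace_smul, trace_one, smul_eq_mul, nsmul_eq_mul] at htrace
  rw [hz, div_mul_eq_mul_div, ← htrace, mul_div_cancel_right₀ _ (Nat.cast_ne_zero.mpr hn)]

end Matrix

/-- Key inequality excluding the identity element: for an irreducible unitary representation
`U` of a finite group `G` on `ℂ^d` with `|G| > d`, and any positive semidefinite `E`,
`E ≤ (1/(|G|/d − 1)) ∑_{g ≠ 1} U g * E * (U g)ᴴ` in the Loewner order. -/
theorem key_inequality_irreducible_nonidentity {G : Type*} [Group G] [Fintype G] [DecidableEq G] {d : ℕ}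
    (hd : 0 < d) (hGd : d < Fintype.card G)
    (U : G →* Matrix.unitaryGroup (Fin d) ℂ)
    (hirr : ∀ A : Matrix (Fin d) (Fin d) ℂ,
      (∀ g, (U g : Matrix (Fin d) (Fin d) ℂ) * A = A * (U g : Matrix (Fin d) (Fin d) ℂ)) →
      ∃ z : ℂ, A = z • (1 : Matrix (Fin d) (Fin d) ℂ))
    (E : Matrix (Fin d) (Fin d) ℂ) (hE : E.PosSemidef) :
    ((1 / ((Fintype.card G : ℂ) / (d : ℂ) - 1)) •
        ∑ g ∈ ({1}ᶜ : Finset G),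
          (U g : Matrix (Fin d) (Fin d) ℂ) * E * ((U g : Matrix (Fin d) (Fin d) ℂ))ᴴ
      - E).PosSemidef := by
  set t : ℝ := Fintype.card G / d with ht_def
  have ht : 1 < t := by
    rw [ht_def, one_lt_div (by positivity)]
    exact_mod_cast hGd
  have hcast : (Fintype.card G : ℂ) / (d : ℂ) = (t : ℂ) := by simp [ht_def]
  have ht_sub_one : (t : ℂ) - 1 ≠ 0 := by exact_mod_cast (sub_pos.mpr ht).ne'
  have hcoef : (0 : ℂ) ≤ (t : ℂ) / ((t : ℂ) - 1) := by
    exact_mod_cast div_nonneg (by linarith) (sub_pos.mpr ht).le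
  rw [Matrix.sum_compl_one_eq_twirl_sub,
    Matrix.twirl_eq_smul_one_of_irreducible U hirr (by simpa using hd.ne'), Fintype.card_fin,
    hcast]
  have hcollect : (1 / ((t : ℂ) - 1)) • (((t : ℂ) * E.trace) • 1 - E) - E
      = ((t : ℂ) / ((t : ℂ) - 1)) • (E.trace • 1 - E) := by
    match_scalars
    · ring
    · field_simp
      ring
  rw [hcollect]
  exact (Matrix.le_iff.mp hE.le_trace_smul_one).smul hcoef
end

section
/- Let U₁, U₂ be unitaries on a system Q and let R be any finite-dimensional ancilla. Then min over unit vectors Φ in Q⊗R of |⟨Φ|(U₁†U₂ ⊗ 1_R)|Φ⟩|² equals min over unit vectors φ in Q of |⟨φ|U₁†U₂|φ⟩|²; i.e., entanglement with an ancilla does not decrease the minimal overlap. -/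
/-!
A unitary `V = U₁ᴴU₂` is normal, so `V = W · diag(μ) · Wᴴ` with `W` unitary. Conjugating by a
unitary does not change the numerical range `{⟨φ|M|φ⟩ : ‖φ‖ = 1}`, and the numerical range of a
diagonal matrix is the convex hull of its diagonal. Since `V ⊗ 1 = (W ⊗ 1) · diag(μ ∘ fst) ·
(W ⊗ 1)ᴴ` and `μ ∘ fst` has the same range as `μ` once the ancilla is nonempty, `V ⊗ 1` and `V`
have the same numerical range, hence the same set of overlaps `|⟨φ|M|φ⟩|²`.
-/

open Matrix Kronecker Set Module.End ComplexStarModule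

theorem LinearMap.exists_orthonormalBasis_eigenvectors_of_isStarNormal
    {E : Type*} [NormedAddCommGroup E] [InnerProductSpace ℂ E] [FiniteDimensional ℂ E]
    {m : ℕ} (hm : Module.finrank ℂ E = m) (T : E →ₗ[ℂ] E) [IsStarNormal T] :
    ∃ (b : OrthonormalBasis (Fin m) ℂ E) (μ : Fin m → ℂ), ∀ k, T (b k) = μ k • b k := by
  classical
  -- `ℜ T` and `ℑ T` are self-adjoint and commute because `T` is normal, so they have a joint
  -- orthonormal eigenbasis, which diagonalizes `T = ℜ T + i ℑ T`.
  set A : E →ₗ[ℂ] E := ↑(ℜ T)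
  set B : E →ₗ[ℂ] E := ↑(ℑ T)
  have hA : A.IsSymmetric := (LinearMap.isSymmetric_iff_isSelfAdjoint A).mpr (ℜ T).2
  have hB : B.IsSymmetric := (LinearMap.isSymmetric_iff_isSelfAdjoint B).mpr (ℑ T).2
  have hint := hA.directSum_isInternal_of_commute hB (Commute.realPart_imaginaryPart T)
  have : Fintype {ν : ℂ × ℂ // eigenspace A ν.2 ⊓ eigenspace B ν.1 ≠ ⊥} :=
    hint.submodule_iSupIndep.fintypeNeBotOfFiniteDimensional
  have hint' := DirectSum.isInternal_ne_bot_iff.mpr hint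
  have horth := (hA.orthogonalFamily_eigenspace_inf_eigenspace hB).comp
    (Subtype.val_injective (p := fun ν : ℂ × ℂ => eigenspace A ν.2 ⊓ eigenspace B ν.1 ≠ ⊥))
  let ν k := (hint'.subordinateOrthonormalBasisIndex hm k horth).1
  refine ⟨hint'.subordinateOrthonormalBasis hm horth, fun k => (ν k).2 + Complex.I * (ν k).1,
    fun k => ?_⟩
  obtain ⟨hre, him⟩ := hint'.subordinateOrthonormalBasis_subordinate hm k horth
  rw [SetLike.mem_coe, mem_eigenspace_iff] at hre him
  calc T _ = (A + Complex.I • B) _ := by rw [realPart_add_I_smul_imaginaryPart]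
    _ = _ := by rw [LinearMap.add_apply, LinearMap.smul_apply, hre, him, add_smul, mul_smul]

theorem convexHull_range_eq_image_stdSimplex {R ι E : Type*} [Field R] [LinearOrder R]
    [IsStrictOrderedRing R] [Fintype ι] [AddCommGroup E] [Module R E] (v : ι → E) :
    convexHull R (range v) = (fun p => ∑ i, p i • v i) '' stdSimplex R ι := by
  classical
  rw [← convexHull_basis_eq_stdSimplex]
  change _ = Fintype.linearCombination R v '' _
  rw [LinearMap.image_convexHull, ← range_comp]
  congr 2
  ext i
  simp [Fintype.linearCombination_apply, ite_smul]

namespace Matrix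

theorem exists_unitary_diagonal_of_isStarNormal {n : Type*} [Fintype n] [DecidableEq n]
    (V : Matrix n n ℂ) [IsStarNormal V] :
    ∃ W ∈ unitaryGroup n ℂ, ∃ μ : n → ℂ, V = W * diagonal μ * star W := by
  have : IsStarNormal (toEuclideanLin V) :=
    IsStarNormal.map (LinearMap.toMatrixOrthonormal (EuclideanSpace.basisFun n ℂ)).symm V
  obtain ⟨b, μ, hb⟩ := LinearMap.exists_orthonormalBasis_eigenvectors_of_isStarNormal
    (E := EuclideanSpace ℂ n) finrank_euclideanSpace (toEuclideanLin V)
  let e := Fintype.equivFin n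
  let W := (EuclideanSpace.basisFun n ℂ).toBasis.toMatrix (b.reindex e.symm)
  have hW : W ∈ unitaryGroup n ℂ :=
    (EuclideanSpace.basisFun n ℂ).toMatrix_orthonormalBasis_mem_unitary (b.reindex e.symm)
  have hVW : V * W = W * diagonal (μ ∘ e) := by
    ext i k
    rw [mul_diagonal]
    simpa [W, mul_apply, Module.Basis.toMatrix_apply, mulVec, dotProduct, mul_comm (μ _)] using
      congr(WithLp.ofLp $(hb (e k)) i)
  refine ⟨W, hW, μ ∘ e, ?_⟩
  rw [← hVW, mul_assoc, Unitary.mul_star_self_of_mem hW, mul_one]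

theorem kronecker_mem_unitaryGroup {R n m : Type*} [CommRing R] [StarRing R]
    [Fintype n] [DecidableEq n] [Fintype m] [DecidableEq m]
    {A : Matrix n n R} {B : Matrix m m R} (hA : A ∈ unitaryGroup n R) (hB : B ∈ unitaryGroup m R) :
    A ⊗ₖ B ∈ unitaryGroup (n × m) R := by
  rw [mem_unitaryGroup_iff, star_eq_conjTranspose, conjTranspose_kronecker, ← mul_kronecker_mul,
    ← star_eq_conjTranspose, ← star_eq_conjTranspose, Unitary.mul_star_self_of_mem hA,
    Unitary.mul_star_self_of_mem hB, one_kronecker_one]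

variable {n m : Type*} [Fintype n] [Fintype m]

def numRange (M : Matrix n n ℂ) : Set ℂ :=
  {z | ∃ φ : n → ℂ, star φ ⬝ᵥ φ = 1 ∧ z = star φ ⬝ᵥ M *ᵥ φ}

theorem star_dotProduct_self_eq_sum_norm_sq (φ : n → ℂ) :
    star φ ⬝ᵥ φ = ((∑ a, ‖φ a‖ ^ 2 : ℝ) : ℂ) := by
  push_cast
  exact Finset.sum_congr rfl fun a _ => Complex.conj_mul' (φ a)

theorem star_dotProduct_diagonal_mulVec [DecidableEq n] (μ φ : n → ℂ) :
    star φ ⬝ᵥ diagonal μ *ᵥ φ = ∑ k, ‖φ k‖ ^ 2 • μ k := by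
  refine Finset.sum_congr rfl fun k _ => ?_
  rw [mulVec_diagonal, Complex.real_smul, Complex.ofReal_pow, ← Complex.conj_mul', Pi.star_apply,
    Complex.star_def]
  ring

theorem image_norm_sq_numRange (M : Matrix n n ℂ) :
    (‖·‖ ^ 2) '' M.numRange =
      {x : ℝ | ∃ φ : n → ℂ, ∑ a, ‖φ a‖ ^ 2 = 1 ∧ x = ‖star φ ⬝ᵥ M *ᵥ φ‖ ^ 2} := by
  ext x
  simp only [numRange, star_dotProduct_self_eq_sum_norm_sq, Complex.ofReal_eq_one, mem_image,
    mem_ofPred_eq]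
  constructor
  · rintro ⟨_, ⟨φ, hφ, rfl⟩, rfl⟩
    exact ⟨φ, hφ, rfl⟩
  · rintro ⟨φ, hφ, rfl⟩
    exact ⟨_, ⟨φ, hφ, rfl⟩, rfl⟩

theorem star_mulVec_dotProduct_mulVec (A B : Matrix n m ℂ) (u v : m → ℂ) :
    star (A *ᵥ u) ⬝ᵥ B *ᵥ v = star u ⬝ᵥ (Aᴴ * B) *ᵥ v := by
  rw [star_mulVec, ← dotProduct_mulVec, mulVec_mulVec]

theorem numRange_conjTranspose_mul_mul_subset [DecidableEq n] {A : Matrix m n ℂ} (hA : Aᴴ * A = 1)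
    (M : Matrix m m ℂ) : (Aᴴ * M * A).numRange ⊆ M.numRange := by
  rintro _ ⟨φ, hφ, rfl⟩
  refine ⟨A *ᵥ φ, ?_, ?_⟩
  · rw [star_mulVec_dotProduct_mulVec, hA, one_mulVec, hφ]
  · rw [mulVec_mulVec, star_mulVec_dotProduct_mulVec, Matrix.mul_assoc]

theorem numRange_unitary_mul_mul_star [DecidableEq n] {W : Matrix n n ℂ}
    (hW : W ∈ unitaryGroup n ℂ) (M : Matrix n n ℂ) : (W * M * star W).numRange = M.numRange := by
  have hWW : star W * W = 1 := Unitary.star_mul_self_of_mem hW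
  have hWW' : W * star W = 1 := Unitary.mul_star_self_of_mem hW
  refine Subset.antisymm ?_ ?_
  · simpa [star_eq_conjTranspose, ← mul_assoc] using
      numRange_conjTranspose_mul_mul_subset (A := Wᴴ)
        (by rw [conjTranspose_conjTranspose]; exact hWW') M
  · calc M.numRange = (Wᴴ * (W * M * star W) * W).numRange := by
          rw [← star_eq_conjTranspose, ← mul_assoc, ← mul_assoc, hWW, one_mul, mul_assoc, hWW,
            mul_one]
      _ ⊆ (W * M * star W).numRange := numRange_conjTranspose_mul_mul_subset hWW _

theorem numRange_diagonal [DecidableEq n] (μ : n → ℂ) :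
    (diagonal μ).numRange = convexHull ℝ (range μ) := by
  rw [convexHull_range_eq_image_stdSimplex]
  ext z
  constructor
  · rintro ⟨φ, hφ, rfl⟩
    rw [star_dotProduct_self_eq_sum_norm_sq, Complex.ofReal_eq_one] at hφ
    exact ⟨fun k => ‖φ k‖ ^ 2, ⟨fun k => by positivity, hφ⟩,
      (star_dotProduct_diagonal_mulVec μ φ).symm⟩
  · rintro ⟨p, ⟨hp0, hp1⟩, rfl⟩
    have hnorm : ∀ k, ‖((√(p k) : ℝ) : ℂ)‖ ^ 2 = p k := fun k => by
      rw [Complex.norm_real, Real.norm_eq_abs, sq_abs, Real.sq_sqrt (hp0 k)]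
    refine ⟨fun k => √(p k), ?_, ?_⟩
    · rw [star_dotProduct_self_eq_sum_norm_sq]
      simp only [hnorm, hp1, Complex.ofReal_one]
    · rw [star_dotProduct_diagonal_mulVec]
      simp only [hnorm]

theorem numRange_kronecker_one [DecidableEq n] [DecidableEq m] [Nonempty m]
    (V : Matrix n n ℂ) [IsStarNormal V] :
    (V ⊗ₖ (1 : Matrix m m ℂ)).numRange = V.numRange := by
  obtain ⟨W, hW, μ, rfl⟩ := exists_unitary_diagonal_of_isStarNormal V
  have hdiag : diagonal μ ⊗ₖ (1 : Matrix m m ℂ) = diagonal (μ ∘ Prod.fst) := by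
    rw [← diagonal_one, diagonal_kronecker_diagonal]
    simp only [mul_one, Function.comp_def]
  have hconj : (W * diagonal μ * star W) ⊗ₖ (1 : Matrix m m ℂ) =
      (W ⊗ₖ 1) * diagonal (μ ∘ Prod.fst) * star (W ⊗ₖ (1 : Matrix m m ℂ)) := by
    rw [← hdiag, star_eq_conjTranspose, star_eq_conjTranspose, conjTranspose_kronecker,
      conjTranspose_one, ← mul_kronecker_mul, ← mul_kronecker_mul, mul_one, mul_one]
  rw [hconj, numRange_unitary_mul_mul_star (kronecker_mem_unitaryGroup hW (one_mem _)),
    numRange_unitary_mul_mul_star hW, numRange_diagonal, numRange_diagonal, range_comp,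
    Prod.fst_surjective.range_eq, image_univ]

end Matrix

theorem min_overlap_ancilla_invariant_general {d r : ℕ} (hr : 0 < r)
    (U₁ U₂ : Matrix (Fin d) (Fin d) ℂ)
    (h₁ : U₁ ∈ Matrix.unitaryGroup (Fin d) ℂ) (h₂ : U₂ ∈ Matrix.unitaryGroup (Fin d) ℂ) :
    sInf {x : ℝ | ∃ Φ : Fin d × Fin r → ℂ, (∑ p, ‖Φ p‖ ^ 2) = 1 ∧
        x = ‖star Φ ⬝ᵥ ((U₁ᴴ * U₂) ⊗ₖ (1 : Matrix (Fin r) (Fin r) ℂ)).mulVec Φ‖ ^ 2} =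
    sInf {x : ℝ | ∃ φ : Fin d → ℂ, (∑ a, ‖φ a‖ ^ 2) = 1 ∧
        x = ‖star φ ⬝ᵥ (U₁ᴴ * U₂).mulVec φ‖ ^ 2} := by
  have := Fin.pos_iff_nonempty.mp hr
  have : IsStarNormal (U₁ᴴ * U₂) := isStarNormal_of_mem_unitary (mul_mem (Unitary.star_mem h₁) h₂)
  rw [← image_norm_sq_numRange, ← image_norm_sq_numRange, numRange_kronecker_one]

/-- Entanglement with an ancilla does not change the minimal overlap: the minimum of
`|⟨Φ|(U₁ᴴU₂ ⊗ 1_R)|Φ⟩|²` over unit vectors `Φ` of the composite system `Q ⊗ R` equals the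
minimum of `|⟨φ|U₁ᴴU₂|φ⟩|²` over unit vectors `φ` of `Q` alone. -/
theorem min_overlap_ancilla_invariant {d r : ℕ} (hd : 0 < d) (hr : 0 < r)
    (U₁ U₂ : Matrix (Fin d) (Fin d) ℂ)
    (h₁ : U₁ ∈ Matrix.unitaryGroup (Fin d) ℂ) (h₂ : U₂ ∈ Matrix.unitaryGroup (Fin d) ℂ) :
    sInf {x : ℝ | ∃ Φ : Fin d × Fin r → ℂ, (∑ p, ‖Φ p‖ ^ 2) = 1 ∧
        x = ‖star Φ ⬝ᵥ ((U₁ᴴ * U₂) ⊗ₖ (1 : Matrix (Fin r) (Fin r) ℂ)).mulVec Φ‖ ^ 2} =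
    sInf {x : ℝ | ∃ φ : Fin d → ℂ, (∑ a, ‖φ a‖ ^ 2) = 1 ∧
        x = ‖star φ ⬝ᵥ (U₁ᴴ * U₂).mulVec φ‖ ^ 2} :=
  min_overlap_ancilla_invariant_general hr U₁ U₂ h₁ h₂
end

section
/- Fix η₁ ≤ η₂ with η₁ + η₂ = 1, and m ∈ [0,1]. The piecewise function P_max(m, S) given by: (1+√(1−4η₁η₂S))/2 if m ≥ m_c(S); (√m + √(1−2√(η₁η₂S)))² if m_c'(S) ≤ m ≤ m_c(S); and η₂(√(mS/η₁) + √((η₁−m)(1−S)/η₁))² if 0 ≤ m ≤ m_c'(S), is monotonically nonincreasing in S ∈ [0,1]. -/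
/-!
Write `P_max = A, B, C` on the three regimes `m_c ≤ m`, `m_c' ≤ m < m_c`, `m < m_c'`. Each piece
is antitone in `S` where it is used: `A` and `B` visibly so, and `C = η₂ ⟨u, v(S)⟩²` with the unit
vectors `u = (√(m/η₁), √(1 - m/η₁))` and `v(S) = (√S, √(1 - S))`, where `v(S)` turns away from `u`
once `S ≥ m/η₁`, which the regime `m < m_c'` guarantees. Both thresholds increase with `S`, so
raising `S` can only move `m` from regime `A` towards `C`. Finally, at a fixed `S` the pieces are
ordered `C ≤ B ≤ A` where they apply: `B` is increasing in `m` and equals `A` at `m = m_c`, and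
`C ≤ B` is Cauchy–Schwarz. Hence for `S₁ ≤ S₂` with pieces `f₁, f₂`,
`P_max(S₂) = f₂(S₂) ≤ f₁(S₂) ≤ f₁(S₁) = P_max(S₁)`.
-/

open Real Set

theorem AntitoneOn.ite {α β : Type*} [Preorder α] [Preorder β] {s : Set α}
    {p : α → Prop} [DecidablePred p] {f g : α → β}
    (hp : ∀ ⦃a⦄, a ∈ s → ∀ ⦃b⦄, b ∈ s → a ≤ b → p b → p a)
    (hf : AntitoneOn f s) (hg : AntitoneOn g {x ∈ s | ¬ p x})
    (hgf : ∀ x ∈ s, ¬ p x → g x ≤ f x) :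
    AntitoneOn (fun x => if p x then f x else g x) s := by
  intro a ha b hb hab
  by_cases hpb : p b
  · simp only [hpb, hp ha hb hab hpb, if_true]
    exact hf ha hb hab
  by_cases hpa : p a
  · simp only [hpa, hpb, if_true, if_false]
    exact (hgf b hb hpb).trans (hf ha hb hab)
  · simp only [hpa, hpb, if_false]
    exact hg ⟨ha, hpa⟩ ⟨hb, hpb⟩ hab

noncomputable section

namespace ErrorMargin

def critMargin (η₁ η₂ S : ℝ) : ℝ := (1 - √(1 - 4 * η₁ * η₂ * S)) / 2

def critMargin' (η₁ η₂ S : ℝ) : ℝ :=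
  if η₁ ≤ η₂ * S then (η₁ - √(η₁ * η₂ * S)) ^ 2 / (1 - 2 * √(η₁ * η₂ * S)) else 0

def pmaxHigh (η₁ η₂ S : ℝ) : ℝ := (1 + √(1 - 4 * η₁ * η₂ * S)) / 2

def pmaxMid (η₁ η₂ m S : ℝ) : ℝ := (√m + √(1 - 2 * √(η₁ * η₂ * S))) ^ 2

def pmaxLow (η₁ η₂ m S : ℝ) : ℝ := η₂ * (√(m / η₁ * S) + √((η₁ - m) / η₁ * (1 - S))) ^ 2

def pmaxBelowCrit (η₁ η₂ m S : ℝ) : ℝ :=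
  if critMargin' η₁ η₂ S ≤ m then pmaxMid η₁ η₂ m S else pmaxLow η₁ η₂ m S

def pmax (η₁ η₂ m S : ℝ) : ℝ :=
  if critMargin η₁ η₂ S ≤ m then pmaxHigh η₁ η₂ S else pmaxBelowCrit η₁ η₂ m S

variable {η₁ η₂ m S : ℝ}

theorem mul_mul_le_one_fourth (h₁ : 0 ≤ η₁) (h₂ : 0 ≤ η₂) (hsum : η₁ + η₂ = 1) (hS : S ≤ 1) :
    η₁ * η₂ * S ≤ 1 / 4 := by
  nlinarith [sq_nonneg (η₁ - η₂), mul_le_of_le_one_right (mul_nonneg h₁ h₂) hS]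

theorem sqrt_mul_mul_le_half (h₁ : 0 ≤ η₁) (h₂ : 0 ≤ η₂) (hsum : η₁ + η₂ = 1) (hS : S ≤ 1) :
    √(η₁ * η₂ * S) ≤ 1 / 2 :=
  (sqrt_le_left (by norm_num)).2 ((mul_mul_le_one_fourth h₁ h₂ hsum hS).trans_eq (by norm_num))

theorem sq_sub_div_monotoneOn (a : ℝ) :
    MonotoneOn (fun u => (a - u) ^ 2 / (1 - 2 * u)) (Ico a (1 / 2)) := by
  rintro u₁ ⟨hau₁, hu₁⟩ u₂ ⟨hau₂, hu₂⟩ hu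
  dsimp only
  rw [div_le_div_iff₀ (by linarith) (by linarith)]
  nlinarith [mul_nonneg (mul_nonneg (sub_nonneg.2 hu) (sub_nonneg.2 hau₁))
      (show (0 : ℝ) ≤ 1 - 2 * u₂ by linarith),
    mul_nonneg (mul_nonneg (sub_nonneg.2 hu) (sub_nonneg.2 hau₂))
      (show (0 : ℝ) ≤ 1 - 2 * a by linarith)]

theorem critMargin_monotone (h₁ : 0 ≤ η₁) (h₂ : 0 ≤ η₂) : Monotone (critMargin η₁ η₂) := by
  intro S₁ S₂ hS
  unfold critMargin
  gcongr

theorem pmaxHigh_antitone (h₁ : 0 ≤ η₁) (h₂ : 0 ≤ η₂) : Antitone (pmaxHigh η₁ η₂) := by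
  intro S₁ S₂ hS
  unfold pmaxHigh
  gcongr

theorem pmaxMid_antitone (h₁ : 0 ≤ η₁) (h₂ : 0 ≤ η₂) : Antitone (pmaxMid η₁ η₂ m) := by
  intro S₁ S₂ hS
  unfold pmaxMid
  gcongr

theorem critMargin'_monotoneOn (h₁ : 0 ≤ η₁) (hle : η₁ ≤ η₂) (hsum : η₁ + η₂ = 1) :
    MonotoneOn (critMargin' η₁ η₂) (Icc 0 1) := by
  rintro S₁ ⟨hS₁0, hS₁1⟩ S₂ ⟨hS₂0, hS₂1⟩ hS
  have h₂ : 0 ≤ η₂ := by linarith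
  have hu₂ := sqrt_mul_mul_le_half h₁ h₂ hsum hS₂1
  unfold critMargin'
  split_ifs with hc₁ hc₂ hc₂
  · have hu : √(η₁ * η₂ * S₁) ≤ √(η₁ * η₂ * S₂) := by gcongr
    have hηu : η₁ ≤ √(η₁ * η₂ * S₁) := le_sqrt_of_sq_le (by nlinarith)
    rcases hu₂.lt_or_eq with hu₂ | hu₂
    · exact sq_sub_div_monotoneOn η₁ ⟨hηu, hu.trans_lt hu₂⟩ ⟨hηu.trans hu, hu₂⟩ hu
    · -- the junk quotient `x / 0 = 0` at `S₂` forces `η₁ = η₂ = 1/2`,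
      -- and then `hηu` gives `√(η₁ η₂ S₁) = 1/2` too
      have hq : η₁ * η₂ * S₂ = 1 / 4 := by
        have := sq_sqrt (show 0 ≤ η₁ * η₂ * S₂ by positivity)
        rw [hu₂] at this
        linarith
      have hη₁ : η₁ = 1 / 2 := by
        nlinarith [mul_le_of_le_one_right (mul_nonneg h₁ h₂) hS₂1]
      rw [le_antisymm (hu.trans_eq hu₂) (hη₁ ▸ hηu), hu₂]
  · exact absurd (hc₁.trans (mul_le_mul_of_nonneg_left hS h₂)) hc₂
  · exact div_nonneg (sq_nonneg _) (by linarith)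
  · exact le_rfl

theorem pmaxMid_critMargin (hq0 : 0 ≤ η₁ * η₂ * S) (hq : η₁ * η₂ * S ≤ 1 / 4) :
    pmaxMid η₁ η₂ (critMargin η₁ η₂ S) S = pmaxHigh η₁ η₂ S := by
  unfold pmaxMid critMargin pmaxHigh
  set u := √(η₁ * η₂ * S)
  set d := √(1 - 4 * η₁ * η₂ * S)
  have hu0 : 0 ≤ u := sqrt_nonneg _
  have hu2 : u ^ 2 = η₁ * η₂ * S := sq_sqrt hq0
  have hu : u ≤ 1 / 2 := (sqrt_le_left (by norm_num)).2 (by linarith)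
  have hd2 : d ^ 2 = 1 - 4 * η₁ * η₂ * S := sq_sqrt (by linarith)
  have hd1 : d ≤ 1 := (sqrt_le_left zero_le_one).2 (by linarith)
  have hdu : 1 - 2 * u ≤ d := by nlinarith [sqrt_nonneg (1 - 4 * η₁ * η₂ * S)]
  have hprod : √((1 - d) / 2 * (1 - 2 * u)) = u - (1 - d) / 2 := by
    rw [show (1 - d) / 2 * (1 - 2 * u) = (u - (1 - d) / 2) ^ 2 by
      linear_combination (-1 / 4 : ℝ) * hd2 - hu2]
    exact sqrt_sq (by linarith)
  rw [add_sq, sq_sqrt (by linarith), sq_sqrt (by linarith), mul_assoc, ← sqrt_mul (by linarith),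
    hprod]
  ring

theorem pmaxMid_le_pmaxHigh (hq0 : 0 ≤ η₁ * η₂ * S) (hq : η₁ * η₂ * S ≤ 1 / 4)
    (hm : m ≤ critMargin η₁ η₂ S) : pmaxMid η₁ η₂ m S ≤ pmaxHigh η₁ η₂ S := by
  rw [← pmaxMid_critMargin hq0 hq]
  unfold pmaxMid
  gcongr

theorem sqrt_mul_add_sqrt_mul_one_sub_antitoneOn {a b : ℝ} (ha : 0 ≤ a) (hb : 0 ≤ b)
    (hab : a + b = 1) : AntitoneOn (fun S => √(a * S) + √(b * (1 - S))) (Icc a 1) := by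
  rintro S₁ ⟨haS₁, hS₁1⟩ S₂ ⟨haS₂, hS₂1⟩ hS
  rcases hS.eq_or_lt with rfl | hS
  · exact le_rfl
  dsimp only
  simp only [sqrt_mul ha, sqrt_mul hb]
  set x₁ := √S₁
  set x₂ := √S₂
  set y₁ := √(1 - S₁)
  set y₂ := √(1 - S₂)
  have hx₁ : x₁ ^ 2 = S₁ := sq_sqrt (by linarith)
  have hx₂ : x₂ ^ 2 = S₂ := sq_sqrt (by linarith)
  have hy₁ : y₁ ^ 2 = 1 - S₁ := sq_sqrt (by linarith)
  have hy₂ : y₂ ^ 2 = 1 - S₂ := sq_sqrt (by linarith)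
  -- `a ≤ S` says that `(√S, √(1 - S))` has turned past `(√a, √b)` on the unit circle
  have past : ∀ S, a ≤ S → S ≤ 1 → √a * √(1 - S) ≤ √b * √S := fun S haS hS1 => by
    rw [← sqrt_mul ha, ← sqrt_mul hb]
    exact sqrt_le_sqrt (by nlinarith)
  have hpos : 0 < (x₁ + x₂) * (y₁ + y₂) :=
    mul_pos (add_pos_of_nonneg_of_pos (sqrt_nonneg _) (sqrt_pos.2 (by linarith)))
      (add_pos_of_pos_of_nonneg (sqrt_pos.2 (by linarith)) (sqrt_nonneg _))
  have key : (√a * x₁ + √b * y₁ - (√a * x₂ + √b * y₂)) * ((x₁ + x₂) * (y₁ + y₂))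
      = (S₂ - S₁) * ((√b * x₁ - √a * y₁) + (√b * x₂ - √a * y₂)) := by
    linear_combination (√a * (y₁ + y₂)) * (hx₁ - hx₂) + (√b * (x₁ + x₂)) * (hy₁ - hy₂)
  have hrhs : 0 ≤ (S₂ - S₁) * ((√b * x₁ - √a * y₁) + (√b * x₂ - √a * y₂)) :=
    mul_nonneg (by linarith) (by linarith [past S₁ haS₁ hS₁1, past S₂ haS₂ hS₂1])
  exact sub_nonneg.1 (nonneg_of_mul_nonneg_left (key ▸ hrhs) hpos)

theorem pmaxLow_antitoneOn (h₁ : 0 < η₁) (h₂ : 0 ≤ η₂) (hm0 : 0 ≤ m) :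
    AntitoneOn (pmaxLow η₁ η₂ m) (Icc (m / η₁) 1) := by
  intro S₁ hS₁ S₂ hS₂ hS
  have hmη : m ≤ η₁ := (div_le_one h₁).1 (hS₁.1.trans hS₁.2)
  have hsqrt := sqrt_mul_add_sqrt_mul_one_sub_antitoneOn (div_nonneg hm0 h₁.le)
    (div_nonneg (sub_nonneg.2 hmη) h₁.le) (by rw [← add_div, add_sub_cancel, div_self h₁.ne'])
    hS₁ hS₂ hS
  unfold pmaxLow
  gcongr

theorem pmaxLow_le_pmaxMid (h₁ : 0 < η₁) (h₂ : 0 ≤ η₂) (hsum : η₁ + η₂ = 1) (hm0 : 0 ≤ m)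
    (hmη : m ≤ η₁) (hS0 : 0 ≤ S) (hS1 : S ≤ 1) : pmaxLow η₁ η₂ m S ≤ pmaxMid η₁ η₂ m S := by
  unfold pmaxLow pmaxMid
  set a := m / η₁
  set b := (η₁ - m) / η₁
  have ha : 0 ≤ a := div_nonneg hm0 h₁.le
  have hb : 0 ≤ b := div_nonneg (sub_nonneg.2 hmη) h₁.le
  have hab : a + b = 1 := by rw [← add_div, add_sub_cancel, div_self h₁.ne']
  have hm : √m = √a * √η₁ := by rw [← sqrt_mul ha, div_mul_cancel₀ _ h₁.ne']
  have hu : √(η₁ * η₂ * S) = √η₁ * √η₂ * √S := by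
    rw [sqrt_mul (by positivity), sqrt_mul h₁.le]
  have hnorm : (√η₂ * √S - √η₁) ^ 2 + (√η₂ * √(1 - S)) ^ 2 = 1 - 2 * √(η₁ * η₂ * S) := by
    rw [hu, sub_sq, mul_pow, mul_pow, sq_sqrt h₂, sq_sqrt hS0, sq_sqrt h₁.le,
      sq_sqrt (by linarith)]
    linear_combination hsum
  -- Cauchy–Schwarz against the unit vector `(√a, √b)`
  have hcs : √a * (√η₂ * √S - √η₁) + √b * (√η₂ * √(1 - S)) ≤ √(1 - 2 * √(η₁ * η₂ * S)) := by
    rw [← hnorm]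
    apply le_sqrt_of_sq_le
    nlinarith [sq_nonneg (√a * (√η₂ * √(1 - S)) - √b * (√η₂ * √S - √η₁)), sq_sqrt ha, sq_sqrt hb]
  calc η₂ * (√(a * S) + √(b * (1 - S))) ^ 2 = (√η₂ * (√a * √S + √b * √(1 - S))) ^ 2 := by
        rw [mul_pow, sq_sqrt h₂, sqrt_mul ha, sqrt_mul hb]
    _ ≤ (√m + √(1 - 2 * √(η₁ * η₂ * S))) ^ 2 := by
        gcongr
        rw [hm]
        linarith

theorem pos_and_le_mul_of_lt_critMargin' (h₁ : 0 ≤ η₁) (hle : η₁ ≤ η₂) (hsum : η₁ + η₂ = 1)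
    (hm0 : 0 ≤ m) (hS0 : 0 ≤ S) (hS1 : S ≤ 1) (h : m < critMargin' η₁ η₂ S) :
    0 < η₁ ∧ m ≤ η₁ * S := by
  have h₂ : 0 ≤ η₂ := by linarith
  unfold critMargin' at h
  split_ifs at h with hc
  swap
  · linarith
  set u := √(η₁ * η₂ * S)
  have hu2 : u ^ 2 = η₁ * η₂ * S := sq_sqrt (by positivity)
  have hηu : η₁ ≤ u := le_sqrt_of_sq_le (by nlinarith)
  have hu : u < 1 / 2 := by
    refine (show u ≤ 1 / 2 from sqrt_mul_mul_le_half h₁ h₂ hsum hS1).lt_of_ne fun hu => ?_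
    rw [hu] at h
    norm_num at h
    linarith
  have hm : m * (1 - 2 * u) < (η₁ - u) ^ 2 := (lt_div_iff₀ (by linarith)).1 h
  -- `u² (1 - 2u) - η₂ (η₁ - u)² = (η₁ η₂ - u²) (2u - η₁)`
  have hcrit : η₂ * (η₁ - u) ^ 2 ≤ u ^ 2 * (1 - 2 * u) := by
    have : u ^ 2 ≤ η₁ * η₂ := hu2 ▸ mul_le_of_le_one_right (mul_nonneg h₁ h₂) hS1
    nlinarith [mul_nonneg (sub_nonneg.2 this) (show 0 ≤ 2 * u - η₁ by linarith)]
  have hη₁ : 0 < η₁ := by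
    refine h₁.lt_of_ne fun h0 => ?_
    have hu0 : u = 0 := by simpa [← h0] using hu2
    rw [hu0, ← h0] at hm
    linarith
  refine ⟨hη₁, ?_⟩
  nlinarith [mul_pos (show 0 < 1 - 2 * u by linarith) (show 0 < η₂ by linarith)]

theorem pmaxBelowCrit_le_pmaxMid (h₁ : 0 ≤ η₁) (hle : η₁ ≤ η₂) (hsum : η₁ + η₂ = 1)
    (hm0 : 0 ≤ m) (hS0 : 0 ≤ S) (hS1 : S ≤ 1) : pmaxBelowCrit η₁ η₂ m S ≤ pmaxMid η₁ η₂ m S := by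
  unfold pmaxBelowCrit
  split_ifs with h
  · exact le_rfl
  obtain ⟨hη₁, hmS⟩ := pos_and_le_mul_of_lt_critMargin' h₁ hle hsum hm0 hS0 hS1 (not_le.1 h)
  exact pmaxLow_le_pmaxMid hη₁ (by linarith) hsum hm0
    (hmS.trans (mul_le_of_le_one_right hη₁.le hS1)) hS0 hS1

theorem pmaxBelowCrit_antitoneOn (h₁ : 0 ≤ η₁) (hle : η₁ ≤ η₂) (hsum : η₁ + η₂ = 1)
    (hm0 : 0 ≤ m) : AntitoneOn (pmaxBelowCrit η₁ η₂ m) (Icc 0 1) := by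
  refine AntitoneOn.ite
    (fun a ha b hb hab h => (critMargin'_monotoneOn h₁ hle hsum ha hb hab).trans h)
    ((pmaxMid_antitone h₁ (by linarith)).antitoneOn _) (fun a ha b hb hab => ?_)
    fun S hS h => (if_neg h).symm.trans_le (pmaxBelowCrit_le_pmaxMid h₁ hle hsum hm0 hS.1 hS.2)
  have hlow : ∀ S ∈ {S ∈ Icc (0 : ℝ) 1 | ¬ critMargin' η₁ η₂ S ≤ m},
      0 < η₁ ∧ S ∈ Icc (m / η₁) 1 := fun S ⟨⟨hS0, hS1⟩, h⟩ => by
    obtain ⟨hη₁, hmS⟩ := pos_and_le_mul_of_lt_critMargin' h₁ hle hsum hm0 hS0 hS1 (not_le.1 h)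
    exact ⟨hη₁, (div_le_iff₀' hη₁).2 hmS, hS1⟩
  obtain ⟨hη₁, ha'⟩ := hlow a ha
  exact pmaxLow_antitoneOn hη₁ (by linarith) hm0 ha' (hlow b hb).2 hab

theorem pmax_antitoneOn (h₁ : 0 ≤ η₁) (hle : η₁ ≤ η₂) (hsum : η₁ + η₂ = 1) (hm0 : 0 ≤ m) :
    AntitoneOn (pmax η₁ η₂ m) (Icc 0 1) := by
  have h₂ : 0 ≤ η₂ := by linarith
  refine AntitoneOn.ite (fun a _ b _ hab h => (critMargin_monotone h₁ h₂ hab).trans h)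
    ((pmaxHigh_antitone h₁ h₂).antitoneOn _)
    ((pmaxBelowCrit_antitoneOn h₁ hle hsum hm0).mono fun S hS => hS.1) fun S ⟨hS0, hS1⟩ h => ?_
  exact (pmaxBelowCrit_le_pmaxMid h₁ hle hsum hm0 hS0 hS1).trans
    (pmaxMid_le_pmaxHigh (by positivity) (mul_mul_le_one_fourth h₁ h₂ hsum hS1) (not_le.1 h).le)

end ErrorMargin

end

theorem pmax_antitone_in_overlap_general (η₁ η₂ : ℝ)
    (h₁ : 0 ≤ η₁) (hle : η₁ ≤ η₂) (hsum : η₁ + η₂ = 1)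
    (m : ℝ) (hm0 : 0 ≤ m) :
    AntitoneOn (fun S : ℝ =>
      if (1 - Real.sqrt (1 - 4 * η₁ * η₂ * S)) / 2 ≤ m then
        (1 + Real.sqrt (1 - 4 * η₁ * η₂ * S)) / 2
      else if (if η₁ ≤ η₂ * S then
            (η₁ - Real.sqrt (η₁ * η₂ * S)) ^ 2 / (1 - 2 * Real.sqrt (η₁ * η₂ * S))
          else 0) ≤ m then
        (Real.sqrt m + Real.sqrt (1 - 2 * Real.sqrt (η₁ * η₂ * S))) ^ 2
      else
        η₂ * (Real.sqrt (m / η₁ * S) + Real.sqrt ((η₁ - m) / η₁ * (1 - S))) ^ 2)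
      (Set.Icc 0 1) :=
  ErrorMargin.pmax_antitoneOn h₁ hle hsum hm0

/-- The maximum success probability `P_max(m, S)` for error-margin discrimination of two pure
states with squared overlap `S` and priors `η₁ ≤ η₂` is monotonically nonincreasing in
`S ∈ [0,1]`. -/
theorem pmax_antitone_in_overlap (η₁ η₂ : ℝ)
    (h₁ : 0 ≤ η₁) (hle : η₁ ≤ η₂) (hsum : η₁ + η₂ = 1)
    (m : ℝ) (hm0 : 0 ≤ m) (hm1 : m ≤ 1) :
    AntitoneOn (fun S : ℝ =>
      if (1 - Real.sqrt (1 - 4 * η₁ * η₂ * S)) / 2 ≤ m then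
        (1 + Real.sqrt (1 - 4 * η₁ * η₂ * S)) / 2
      else if (if η₁ ≤ η₂ * S then
            (η₁ - Real.sqrt (η₁ * η₂ * S)) ^ 2 / (1 - 2 * Real.sqrt (η₁ * η₂ * S))
          else 0) ≤ m then
        (Real.sqrt m + Real.sqrt (1 - 2 * Real.sqrt (η₁ * η₂ * S))) ^ 2
      else
        η₂ * (Real.sqrt (m / η₁ * S) + Real.sqrt ((η₁ - m) / η₁ * (1 - S))) ^ 2)
      (Set.Icc 0 1) :=
  pmax_antitone_in_overlap_general η₁ η₂ h₁ hle hsum m hm0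
end

section
/- Let U be an irreducible unitary representation of a finite group G on ℂ^d with |G| > d, let ρ be a density operator, and let E₁ be positive semidefinite with Σ_{g∈G} U_g E₁ U_g† ≤ 1. If Σ_{g≠1} tr(E₁ U_g ρ U_g†) ≤ m, then tr(E₁ ρ) ≤ min( d/|G| , m/(|G|/d − 1) ). -/
open Matrix BigOperators ComplexOrder

private lemma trace_nonneg_of_psd {n : Type*} [Fintype n] [DecidableEq n]
    {A : Matrix n n ℂ} (hA : A.PosSemidef) : 0 ≤ A.trace := by
  rw [Matrix.trace]
  apply Finset.sum_nonneg
  intro i _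
  have h := hA.dotProduct_mulVec_nonneg (Pi.single i 1)
  have : dotProduct (star (Pi.single i 1)) (A *ᵥ Pi.single i 1) = A i i := by
    simp [dotProduct, Matrix.mulVec, Pi.single_apply, Finset.sum_ite_eq,
      apply_ite, mul_comm]
  rwa [this] at h

private lemma trace_mul_nonneg_of_psd {n : Type*} [Fintype n] [DecidableEq n]
    {A B : Matrix n n ℂ} (hA : A.PosSemidef) (hB : B.PosSemidef) :
    0 ≤ (A * B).trace := by
  obtain ⟨X, hX⟩ : ∃ X : Matrix n n ℂ, A = Xᴴ * X := by
    open scoped MatrixOrder in exact CStarAlgebra.nonneg_iff_eq_star_mul_self.mp hA.nonneg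
  obtain ⟨Y, hY⟩ : ∃ Y : Matrix n n ℂ, B = Yᴴ * Y := by
    open scoped MatrixOrder in exact CStarAlgebra.nonneg_iff_eq_star_mul_self.mp hB.nonneg
  have key : (A * B).trace = ((X * Yᴴ) * (X * Yᴴ)ᴴ).trace := by
    rw [hX, hY]
    rw [show Xᴴ * X * (Yᴴ * Y) = Xᴴ * (X * Yᴴ * Y) by noncomm_ring]
    rw [Matrix.trace_mul_comm]
    rw [Matrix.conjTranspose_mul, Matrix.conjTranspose_conjTranspose]
    noncomm_ring
  rw [key]
  exact trace_nonneg_of_psd (Matrix.posSemidef_self_mul_conjTranspose _)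

private lemma one_sub_psd {n : Type*} [Fintype n] [DecidableEq n]
    {ρ : Matrix n n ℂ} (hρ : ρ.PosSemidef) (hρ1 : ρ.trace = 1) :
    ((1 : Matrix n n ℂ) - ρ).PosSemidef := by
  have hH := hρ.isHermitian
  set V : Matrix n n ℂ := (Matrix.IsHermitian.eigenvectorUnitary hH : Matrix n n ℂ) with hV
  have hVV : V * star V = 1 :=
    Matrix.mem_unitaryGroup_iff.mp (Matrix.IsHermitian.eigenvectorUnitary hH).2
  have hVV' : star V * V = 1 :=
    Matrix.mem_unitaryGroup_iff'.mp (Matrix.IsHermitian.eigenvectorUnitary hH).2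
  have hspec : ρ = V * Matrix.diagonal (RCLike.ofReal ∘ hH.eigenvalues) * star V :=
    hH.spectral_theorem
  have htr : ρ.trace = ∑ i, (hH.eigenvalues i : ℂ) := by
    conv_lhs => rw [hspec]
    rw [Matrix.trace_mul_comm, ← mul_assoc, hVV', one_mul, Matrix.trace_diagonal]
    rfl
  have hsum : ∑ i, hH.eigenvalues i = 1 := by
    have := htr ▸ hρ1
    have h2 : ((∑ i, hH.eigenvalues i : ℝ) : ℂ) = 1 := by push_cast; exact this
    exact_mod_cast h2
  have hle : ∀ i, hH.eigenvalues i ≤ 1 := by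
    intro i
    rw [← hsum]
    exact Finset.single_le_sum (fun j _ => hρ.eigenvalues_nonneg j) (Finset.mem_univ i)
  have hdiag : (Matrix.diagonal (fun i => ((1 - hH.eigenvalues i : ℝ) : ℂ))).PosSemidef := by
    apply Matrix.PosSemidef.diagonal
    intro i
    simp only [Pi.zero_apply]
    rw [Complex.zero_le_real]
    linarith [hle i]
  have hdd : Matrix.diagonal (fun i => ((1 - hH.eigenvalues i : ℝ) : ℂ))
      = 1 - Matrix.diagonal (RCLike.ofReal ∘ hH.eigenvalues) := by
    have hf : (fun i => ((1 - hH.eigenvalues i : ℝ) : ℂ))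
        = fun i => (1 : ℂ) - ((hH.eigenvalues i : ℝ) : ℂ) := by
      funext i; push_cast; ring
    rw [hf]
    ext i j
    by_cases h : i = j <;>
      simp [Matrix.diagonal_apply, Matrix.one_apply, h, Function.comp]
  have key : (1 : Matrix n n ℂ) - ρ
      = V * Matrix.diagonal (fun i => ((1 - hH.eigenvalues i : ℝ) : ℂ)) * star V := by
    rw [hdd, mul_sub, mul_one, sub_mul, hVV, ← hspec]
  rw [key, Matrix.star_eq_conjTranspose]
  exact hdiag.mul_mul_conjTranspose_same V

/-- Upper bound on the success probability in the irreducible case: if `U` is an irreducible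
unitary representation of `G` on `ℂ^d` with `|G| > d`, `ρ` is a state, `E₁ ≥ 0` with
`∑ g, U g E₁ U gᴴ ≤ 1`, and the error probability `∑_{g≠1} tr(E₁ U g ρ U gᴴ) ≤ m`, then
`tr(E₁ ρ) ≤ min(d/|G|, m/(|G|/d − 1))`. -/
theorem success_probability_upper_bound_irreducible {G : Type*} [Group G] [Fintype G]
    [DecidableEq G] {d : ℕ} (hd : 0 < d) (hGd : d < Fintype.card G)
    (U : G →* Matrix.unitaryGroup (Fin d) ℂ)
    (hirr : ∀ A : Matrix (Fin d) (Fin d) ℂ,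
      (∀ g, (U g : Matrix (Fin d) (Fin d) ℂ) * A = A * (U g : Matrix (Fin d) (Fin d) ℂ)) →
      ∃ z : ℂ, A = z • (1 : Matrix (Fin d) (Fin d) ℂ))
    (ρ : Matrix (Fin d) (Fin d) ℂ) (hρ : ρ.PosSemidef) (hρ1 : ρ.trace = 1)
    (E₁ : Matrix (Fin d) (Fin d) ℂ) (hE₁ : E₁.PosSemidef)
    (hE₁le : ((1 : Matrix (Fin d) (Fin d) ℂ) -
        ∑ g : G, (U g : Matrix (Fin d) (Fin d) ℂ) * E₁ *
          ((U g : Matrix (Fin d) (Fin d) ℂ))ᴴ).PosSemidef)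
    (m : ℝ)
    (hm : (∑ g ∈ ({1}ᶜ : Finset G),
        (E₁ * ((U g : Matrix (Fin d) (Fin d) ℂ) * ρ *
          ((U g : Matrix (Fin d) (Fin d) ℂ))ᴴ)).trace).re ≤ m) :
    ((E₁ * ρ).trace).re ≤
      min ((d : ℝ) / (Fintype.card G : ℝ)) (m / ((Fintype.card G : ℝ) / (d : ℝ) - 1)) := by
  classical
  set Uc : G → Matrix (Fin d) (Fin d) ℂ := fun g => (U g : Matrix (Fin d) (Fin d) ℂ) with hUc
  have hstar : ∀ g : G, (Uc g)ᴴ = Uc g⁻¹ := by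
    intro g
    rw [hUc]
    simp only [map_inv, Matrix.UnitaryGroup.inv_val, Matrix.star_eq_conjTranspose]
  have hmulstar : ∀ g : G, Uc g * (Uc g)ᴴ = 1 := by
    intro g
    rw [← Matrix.star_eq_conjTranspose]
    exact Matrix.mem_unitaryGroup_iff.mp (U g).2
  have hstarmul : ∀ g : G, (Uc g)ᴴ * Uc g = 1 := by
    intro g
    rw [← Matrix.star_eq_conjTranspose]
    exact Matrix.mem_unitaryGroup_iff'.mp (U g).2
  set S : Matrix (Fin d) (Fin d) ℂ := ∑ g : G, Uc g * E₁ * (Uc g)ᴴ with hS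
  have hcomm : ∀ h : G, Uc h * S = S * Uc h := by
    intro h
    have key : Uc h * S * (Uc h)ᴴ = S := by
      rw [hS, Finset.mul_sum, Finset.sum_mul]
      rw [← Equiv.sum_comp (Equiv.mulLeft h) (fun g => Uc g * E₁ * (Uc g)ᴴ)]
      apply Finset.sum_congr rfl
      intro g _
      have : Uc (h * g) = Uc h * Uc g := by rw [hUc]; simp [_root_.map_mul]
      simp only [Equiv.coe_mulLeft, this, Matrix.conjTranspose_mul, mul_assoc]
    calc Uc h * S = Uc h * S * ((Uc h)ᴴ * Uc h) := by rw [hstarmul, mul_one]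
    _ = (Uc h * S * (Uc h)ᴴ) * Uc h := by noncomm_ring
    _ = S * Uc h := by rw [key]
  obtain ⟨z, hz⟩ := hirr S hcomm
  -- trace of S
  have htrS : S.trace = (Fintype.card G : ℂ) * E₁.trace := by
    rw [hS, Matrix.trace_sum]
    rw [Finset.sum_congr rfl (fun g _ => ?_), Finset.sum_const, Finset.card_univ,
      nsmul_eq_mul]
    rw [Matrix.trace_mul_cycle, hstarmul, one_mul]
  have htrz : S.trace = z * (d : ℂ) := by
    rw [hz, Matrix.trace_smul, Matrix.trace_one, smul_eq_mul]
    simp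
  have hzd : z * (d : ℂ) = (Fintype.card G : ℂ) * E₁.trace := by rw [← htrz, htrS]
  -- sum over all g of success-type traces equals z
  have hterm : ∀ g : G, (E₁ * (Uc g * ρ * (Uc g)ᴴ)).trace
      = ((Uc g⁻¹ * E₁ * (Uc g⁻¹)ᴴ) * ρ).trace := by
    intro g
    have h1 : (Uc g⁻¹)ᴴ = Uc g := by rw [hstar, inv_inv]
    rw [h1, hstar g]
    rw [show E₁ * (Uc g * ρ * Uc g⁻¹) = (E₁ * Uc g * ρ) * Uc g⁻¹ by noncomm_ring,
      Matrix.trace_mul_comm,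
      show Uc g⁻¹ * (E₁ * Uc g * ρ) = Uc g⁻¹ * E₁ * Uc g * ρ by noncomm_ring]
  have hsumall : ∑ g : G, (E₁ * (Uc g * ρ * (Uc g)ᴴ)).trace = z := by
    calc ∑ g : G, (E₁ * (Uc g * ρ * (Uc g)ᴴ)).trace
        = ∑ g : G, ((Uc g⁻¹ * E₁ * (Uc g⁻¹)ᴴ) * ρ).trace :=
          Finset.sum_congr rfl (fun g _ => hterm g)
      _ = ∑ g : G, ((Uc g * E₁ * (Uc g)ᴴ) * ρ).trace := by
          rw [← Equiv.sum_comp (Equiv.inv G) (fun g => ((Uc g * E₁ * (Uc g)ᴴ) * ρ).trace)]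
          rfl
      _ = (S * ρ).trace := by rw [hS, Finset.sum_mul, Matrix.trace_sum]
      _ = z := by
          rw [hz, Matrix.smul_mul, Matrix.trace_smul, one_mul, hρ1, smul_eq_mul, mul_one]
  -- split off identity term
  have hone : (E₁ * (Uc 1 * ρ * (Uc 1)ᴴ)).trace = (E₁ * ρ).trace := by
    have : Uc (1 : G) = 1 := by rw [hUc]; simp
    rw [this, Matrix.conjTranspose_one, one_mul, mul_one]
  have hsplit : (E₁ * ρ).trace
      + ∑ g ∈ ({1}ᶜ : Finset G), (E₁ * (Uc g * ρ * (Uc g)ᴴ)).trace = z := by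
    rw [← hone, ← hsumall]
    rw [← Finset.sum_add_sum_compl ({1} : Finset G)
      (fun g => (E₁ * (Uc g * ρ * (Uc g)ᴴ)).trace)]
    simp
  -- real quantities
  set p : ℝ := ((E₁ * ρ).trace).re with hp
  set t : ℝ := (E₁.trace).re with ht
  set nG : ℝ := (Fintype.card G : ℝ) with hnG
  have hd' : (0 : ℝ) < d := by exact_mod_cast hd
  have hnG0 : (0 : ℝ) < nG := by
    rw [hnG]; exact_mod_cast Fintype.card_pos
  have hdnG : (d : ℝ) < nG := by rw [hnG]; exact_mod_cast hGd
  -- z real part relation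
  have hzre : z.re * (d : ℝ) = nG * t := by
    have := congrArg Complex.re hzd
    simpa [Complex.mul_re, hnG, ht] using this
  -- p ≤ t
  have hpt : p ≤ t := by
    have h0 := trace_mul_nonneg_of_psd hE₁ (one_sub_psd hρ hρ1)
    have h1 : (E₁ * ((1 : Matrix (Fin d) (Fin d) ℂ) - ρ)).trace
        = E₁.trace - (E₁ * ρ).trace := by
      rw [mul_sub, Matrix.trace_sub, mul_one]
    rw [h1] at h0
    have := (Complex.le_def.mp h0).1
    simpa [hp, ht, Complex.sub_re] using this
  have hp0 : 0 ≤ p := by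
    have h0 := trace_mul_nonneg_of_psd hE₁ hρ
    have := (Complex.le_def.mp h0).1
    simpa [hp] using this
  -- from 1 - S psd : nG * t ≤ d
  have hts : nG * t ≤ (d : ℝ) := by
    have h0 := trace_nonneg_of_psd hE₁le
    have h1 : ((1 : Matrix (Fin d) (Fin d) ℂ) - S).trace = (d : ℂ) - z * (d : ℂ) := by
      rw [Matrix.trace_sub, Matrix.trace_one, htrz]
      simp
    rw [h1] at h0
    have h2 := (Complex.le_def.mp h0).1
    have : z.re * (d : ℝ) ≤ (d : ℝ) := by
      simpa [Complex.sub_re, Complex.mul_re] using h2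
    linarith [hzre ▸ this]
  -- from the split : z.re ≤ p + m
  have hzpm : z.re ≤ p + m := by
    have := congrArg Complex.re hsplit
    rw [Complex.add_re] at this
    rw [← this]
    simp only [hp]
    linarith [hm]
  -- conclusion
  have hnp : nG * p ≤ z.re * (d : ℝ) := by
    rw [hzre]
    have := mul_le_mul_of_nonneg_left hpt (le_of_lt hnG0)
    linarith
  refine le_min ?_ ?_
  · rw [le_div_iff₀ hnG0]
    nlinarith
  · have hc : (0 : ℝ) < nG / (d : ℝ) - 1 := by
      rw [sub_pos, lt_div_iff₀ hd']
      linarith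
    rw [le_div_iff₀ hc]
    have h1 : nG * p ≤ (p + m) * (d : ℝ) := le_trans hnp (by nlinarith)
    have h2 : p * (nG / (d : ℝ) - 1) * (d : ℝ) = nG * p - p * (d : ℝ) := by
      field_simp
    have h3 : p * (nG / (d : ℝ) - 1) * (d : ℝ) ≤ m * (d : ℝ) := by
      rw [h2]; nlinarith
    exact le_of_mul_le_mul_right h3 hd'
end
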